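/- arXiv:1210.2180 — 2 statements merged into one kernel-verified Lean document; each statement's English description precedes it below -/
import Mathlib

section
/- For fixed u > 0, the limit as n → ∞ (over natural numbers) of u·k_n'(u)/(n·k_n(u)) equals -1, where k_n is the modified spherical Hankel function and the derivative is with respect to u. -/
open Filter

/-- The modified spherical Hankel function. -/
noncomputable def sphericalHankel (n : ℕ) (u : ℝ) : ℝ :=
  (Real.pi * Real.exp (-u) / (2 * u)) *
    ∑ l ∈ Finset.range (n + 1),
      ((Nat.factorial (n + l) : ℝ) / (Nat.factorial l * Nat.factorial (n - l))) *
        (1 / (2 * u) ^ l)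

/-!
Write `k_n(u) = π e^{-u}/(2u) · ∑_{l ≤ n} w_l` with `w_l = (n+l)!/(l!(n-l)!) · (2u)^{-l}`.
Differentiating termwise gives `u k_n'(u)/k_n(u) = -(u + 1) - (∑ l w_l)/(∑ w_l)`, so the claim
is that the `w`-weighted mean of `l` is `n + O(1)`. Since
`2^j n(n-1)⋯(n-j+1) ≤ 2n(2n-1)⋯(2n-j+1)`, one has `w_{n-j} ≤ w_n u^j/j!`, hence
`∑ (n-l) w_l ≤ u e^u w_n ≤ u e^u ∑ w_l`.
-/

open Finset Nat

theorem Nat.two_pow_mul_descFactorial_le (n j : ℕ) :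
    2 ^ j * n.descFactorial j ≤ (2 * n).descFactorial j := by
  induction j with
  | zero => simp
  | succ j ih =>
    rw [descFactorial_succ, descFactorial_succ, pow_succ]
    calc 2 ^ j * 2 * ((n - j) * n.descFactorial j)
        = 2 * (n - j) * (2 ^ j * n.descFactorial j) := by ring
      _ ≤ (2 * n - j) * (2 * n).descFactorial j := by gcongr; omega

theorem Nat.factorial_add_mul_two_pow_mul_factorial_le {n l : ℕ} (hl : l ≤ n) :
    (n + l)! * 2 ^ (n - l) * n ! ≤ (2 * n)! * l ! := by
  rw [← factorial_mul_descFactorial (show n - l ≤ 2 * n by omega),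
    ← factorial_mul_descFactorial (show n - l ≤ n by omega),
    show 2 * n - (n - l) = n + l by omega, show n - (n - l) = l by omega]
  calc (n + l)! * 2 ^ (n - l) * (l ! * n.descFactorial (n - l))
      = (n + l)! * l ! * (2 ^ (n - l) * n.descFactorial (n - l)) := by ring
    _ ≤ (n + l)! * l ! * (2 * n).descFactorial (n - l) := by
      gcongr; exact two_pow_mul_descFactorial_le n (n - l)
    _ = (n + l)! * (2 * n).descFactorial (n - l) * l ! := by ring

theorem Real.sum_range_mul_pow_div_factorial_le {x : ℝ} (hx : 0 ≤ x) (m : ℕ) :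
    ∑ j ∈ range m, (j : ℝ) * (x ^ j / j !) ≤ x * Real.exp x := by
  cases m with
  | zero => simp; positivity
  | succ m =>
    have hterm (i : ℕ) : ((i + 1 : ℕ) : ℝ) * (x ^ (i + 1) / (i + 1)!) = x * (x ^ i / i !) := by
      rw [factorial_succ]; push_cast; field_simp; ring
    rw [sum_range_succ']
    simp only [hterm, CharP.cast_eq_zero, zero_mul, add_zero, ← mul_sum]
    exact mul_le_mul_of_nonneg_left (Real.sum_le_exp_of_nonneg hx m) hx

theorem hasDerivAt_one_div_const_mul_pow (l : ℕ) {c u : ℝ} (hc : c ≠ 0) (hu : u ≠ 0) :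
    HasDerivAt (fun v : ℝ => 1 / (c * v) ^ l) (-(l / u) * (1 / (c * u) ^ l)) u := by
  have h := hasDerivAt_zpow (-(l : ℤ)) (c * u) (Or.inl (mul_ne_zero hc hu))
  have hf : (fun v : ℝ => 1 / (c * v) ^ l) = (fun x => x ^ (-(l : ℤ))) ∘ (c * ·) := by
    funext v; simp [zpow_neg]
  rw [hf]
  refine (h.comp u ((hasDerivAt_id u).const_mul c)).congr_deriv ?_
  rw [zpow_sub₀ (mul_ne_zero hc hu), zpow_neg, zpow_natCast, zpow_one]
  push_cast
  field_simp

namespace SphericalHankel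

noncomputable def prefactor (u : ℝ) : ℝ := Real.pi * Real.exp (-u) / (2 * u)

noncomputable def coeff (n l : ℕ) : ℝ := (n + l)! / (l ! * (n - l)!)

noncomputable def term (n l : ℕ) (u : ℝ) : ℝ := coeff n l * (1 / (2 * u) ^ l)

noncomputable def series (n : ℕ) (u : ℝ) : ℝ := ∑ l ∈ range (n + 1), term n l u

noncomputable def indexSeries (n : ℕ) (u : ℝ) : ℝ := ∑ l ∈ range (n + 1), (l : ℝ) * term n l u

theorem sphericalHankel_eq (n : ℕ) (u : ℝ) : sphericalHankel n u = prefactor u * series n u := rfl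

theorem coeff_pos (n l : ℕ) : 0 < coeff n l := by
  unfold coeff; positivity

theorem term_pos (n l : ℕ) {u : ℝ} (hu : 0 < u) : 0 < term n l u := by
  have := coeff_pos n l
  unfold term; positivity

theorem series_pos (n : ℕ) {u : ℝ} (hu : 0 < u) : 0 < series n u :=
  sum_pos (fun l _ => term_pos n l hu) nonempty_range_add_one

theorem coeff_mul_two_pow_mul_factorial_le {n l : ℕ} (hl : l ≤ n) :
    coeff n l * (2 ^ (n - l) * (n - l)!) ≤ coeff n n := by
  have key := Nat.cast_le (α := ℝ).mpr (factorial_add_mul_two_pow_mul_factorial_le hl)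
  push_cast at key
  unfold coeff
  rw [Nat.sub_self, factorial_zero, cast_one, mul_one, ← two_mul, div_mul_eq_mul_div,
    div_le_div_iff₀ (by positivity) (by positivity)]
  calc (n + l)! * (2 ^ (n - l) * (n - l)!) * (n ! : ℝ)
      = (n + l)! * 2 ^ (n - l) * n ! * (n - l)! := by ring
    _ ≤ (2 * n)! * l ! * (n - l)! := by gcongr
    _ = _ := by ring

theorem term_le_term_mul {n l : ℕ} (hl : l ≤ n) {u : ℝ} (hu : 0 < u) :
    term n l u ≤ term n n u * (u ^ (n - l) / (n - l)!) := by
  have hsplit : (2 * u) ^ n = (2 * u) ^ l * (2 * u) ^ (n - l) := by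
    rw [← pow_add, Nat.add_sub_cancel' hl]
  calc term n l u
      = coeff n l * (2 ^ (n - l) * (n - l)!) * (1 / (2 * u) ^ n * (u ^ (n - l) / (n - l)!)) := by
        rw [term, hsplit, mul_pow]; field_simp; ring
    _ ≤ coeff n n * (1 / (2 * u) ^ n * (u ^ (n - l) / (n - l)!)) := by
        gcongr; exact coeff_mul_two_pow_mul_factorial_le hl
    _ = _ := by rw [term]; ring

theorem sum_sub_mul_term_le (n : ℕ) {u : ℝ} (hu : 0 < u) :
    ∑ l ∈ range (n + 1), ((n : ℝ) - l) * term n l u ≤ u * Real.exp u * term n n u := by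
  calc ∑ l ∈ range (n + 1), ((n : ℝ) - l) * term n l u
      ≤ ∑ l ∈ range (n + 1), ((n - l : ℕ) : ℝ) * (u ^ (n - l) / (n - l)!) * term n n u := by
        refine sum_le_sum fun l hl => ?_
        have hln : l ≤ n := Nat.lt_succ_iff.mp (mem_range.mp hl)
        rw [Nat.cast_sub hln, mul_assoc, mul_comm (_ / _)]
        exact mul_le_mul_of_nonneg_left (term_le_term_mul hln hu) (by simpa using hln)
    _ = (∑ j ∈ range (n + 1), (j : ℝ) * (u ^ j / j !)) * term n n u := by
        rw [sum_mul, ← sum_range_reflect (fun j => (j : ℝ) * (u ^ j / j !) * _)]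
        simp only [add_tsub_cancel_right]
    _ ≤ u * Real.exp u * term n n u :=
        mul_le_mul_of_nonneg_right (Real.sum_range_mul_pow_div_factorial_le hu.le _)
          (term_pos n n hu).le

theorem indexSeries_div_series_le (n : ℕ) {u : ℝ} (hu : 0 < u) :
    indexSeries n u / series n u ≤ n := by
  rw [div_le_iff₀ (series_pos n hu), series, mul_sum]
  refine sum_le_sum fun l hl => ?_
  have := term_pos n l hu
  gcongr
  exact_mod_cast Nat.lt_succ_iff.mp (mem_range.mp hl)

theorem sub_le_indexSeries_div_series (n : ℕ) {u : ℝ} (hu : 0 < u) :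
    n - u * Real.exp u ≤ indexSeries n u / series n u := by
  rw [le_div_iff₀ (series_pos n hu), sub_mul, sub_le_comm]
  have hlast : term n n u ≤ series n u :=
    single_le_sum (fun l _ => (term_pos n l hu).le) (self_mem_range_succ n)
  calc n * series n u - indexSeries n u
      = ∑ l ∈ range (n + 1), ((n : ℝ) - l) * term n l u := by
        simp only [series, indexSeries, mul_sum, ← sum_sub_distrib, sub_mul]
    _ ≤ u * Real.exp u * term n n u := sum_sub_mul_term_le n hu
    _ ≤ u * Real.exp u * series n u := by gcongr

theorem hasDerivAt_prefactor {u : ℝ} (hu : u ≠ 0) :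
    HasDerivAt prefactor (-prefactor u * ((u + 1) / u)) u := by
  have hexp : HasDerivAt (fun v => Real.exp (-v)) (-Real.exp (-u)) u := by
    simpa using (hasDerivAt_neg u).exp
  refine ((hexp.const_mul Real.pi).div ((hasDerivAt_id u).const_mul 2)
    (by positivity)).congr_deriv ?_
  simp only [prefactor, id]
  field_simp
  ring

theorem hasDerivAt_series (n : ℕ) {u : ℝ} (hu : u ≠ 0) :
    HasDerivAt (series n) (-(indexSeries n u / u)) u := by
  have h := HasDerivAt.fun_sum (u := range (n + 1)) fun l _ =>
    (hasDerivAt_one_div_const_mul_pow l two_ne_zero hu).const_mul (coeff n l)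
  refine h.congr_deriv ?_
  simp only [indexSeries, term, sum_div, ← sum_neg_distrib]
  exact sum_congr rfl fun l _ => by ring

theorem mul_deriv_sphericalHankel (n : ℕ) {u : ℝ} (hu : u ≠ 0) :
    u * deriv (fun v => sphericalHankel n v) u =
      -prefactor u * ((u + 1) * series n u + indexSeries n u) := by
  change u * deriv (prefactor * series n) u = _
  rw [((hasDerivAt_prefactor hu).mul (hasDerivAt_series n hu)).deriv]
  field_simp
  ring

theorem mul_deriv_div_mul_sphericalHankel (n : ℕ) {u : ℝ} (hu : 0 < u) :
    u * deriv (fun v => sphericalHankel n v) u / (n * sphericalHankel n u) =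
      -((u + 1) / n + indexSeries n u / series n u / n) := by
  have hS := series_pos n hu
  have hpre : 0 < prefactor u := by unfold prefactor; positivity
  rw [mul_deriv_sphericalHankel n hu.ne', sphericalHankel_eq]
  field_simp

end SphericalHankel

theorem tendsto_div_natCast_of_sub_le_of_le (K : ℝ) {b : ℕ → ℝ}
    (hlow : ∀ n, n - K ≤ b n) (hup : ∀ n, b n ≤ n) :
    Tendsto (fun n => b n / n) atTop (nhds 1) := by
  have hK : Tendsto (fun n : ℕ => 1 - K / n) atTop (nhds 1) := by
    simpa using (tendsto_const_div_atTop_nhds_zero_nat K).const_sub 1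
  refine tendsto_of_tendsto_of_tendsto_of_le_of_le' hK tendsto_const_nhds ?_ ?_ <;>
    filter_upwards [eventually_gt_atTop 0] with n hn <;>
    have hn' : (0 : ℝ) < n := by exact_mod_cast hn
  · rw [one_sub_div hn'.ne', div_le_div_iff_of_pos_right hn']; exact hlow n
  · rw [div_le_one hn']; exact hup n

open SphericalHankel in
/-- For fixed `u > 0`, `u k_n'(u)/(n k_n(u)) → -1` as `n → ∞`. -/
theorem tendsto_logDeriv_sphericalHankel (u : ℝ) (hu : 0 < u) :
    Tendsto (fun n : ℕ =>
        u * deriv (fun v => sphericalHankel n v) u / ((n : ℝ) * sphericalHankel n u))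
      atTop (nhds (-1)) := by
  have hmean : Tendsto (fun n : ℕ => indexSeries n u / series n u / n) atTop (nhds 1) :=
    tendsto_div_natCast_of_sub_le_of_le _ (sub_le_indexSeries_div_series · hu)
      (indexSeries_div_series_le · hu)
  have hlim := ((tendsto_const_div_atTop_nhds_zero_nat (u + 1)).add hmean).neg
  rw [zero_add] at hlim
  exact hlim.congr fun n => (mul_deriv_div_mul_sphericalHankel n hu).symm
end

section
/- Large-n asymptotics of the logarithmic derivative: for fixed u > 0, u·k_n'(u)/k_n(u) = −n − 1 − u²/(2n) + O(1/n²) as n → ∞; in particular n → ∞ limit of (u k_n'(u)/k_n(u) + n + 1) equals 0. -/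
open Filter

/-!
Up to the factor `π e^{-u} / (2u)`, `k_n(u)` is the Bessel polynomial `y_n` evaluated at `1/u`.
The identities `x² y_{n+1}' + y_{n+1} = (n+1) x y_{n+1} + y_n` and
`y_{n+2} = y_n + (2n+3) x y_{n+1}` translate into
`u k_{n+1}'(u) / k_{n+1}(u) + n + 2 = -r_n` and `r_{n+1} = u² / (2n + 3 + r_n)`
for the positive ratios `r_n = u k_n(u) / k_{n+1}(u)`. Hence `0 < r_n ≤ u²` for `n ≥ 1`, and
`r_{n+1} = u² / (2(n+2) - 1 + r_n)` differs from `u² / (2(n+2))` by `O(1/n²)`.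
-/

open Finset Polynomial Nat

theorem Nat.factorial_two_mul (l : ℕ) : (2 * l)! = 2 ^ l * l ! * (2 * l - 1)‼ := by
  cases l with
  | zero => rfl
  | succ m =>
    rw [show 2 * (m + 1) = (2 * m + 1) + 1 by ring, factorial_eq_mul_doubleFactorial,
      show 2 * m + 1 + 1 = 2 * (m + 1) by ring, doubleFactorial_two_mul,
      show 2 * (m + 1) - 1 = 2 * m + 1 by omega]

theorem Polynomial.coeff_X_mul_derivative {R : Type*} [Semiring R] (p : R[X]) (k : ℕ) :
    (X * derivative p).coeff k = k * p.coeff k := by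
  cases k with
  | zero => simp
  | succ k => rw [coeff_X_mul, coeff_derivative, ← Nat.cast_succ, Nat.cast_comm]

/-- `(n + l)! / (l! (n - l)! 2^l)`, in a form that vanishes for `l > n`. -/
def besselPolyCoeff (n l : ℕ) : ℕ := (n + l).choose (2 * l) * (2 * l - 1)‼

theorem besselPolyCoeff_eq_zero {n l : ℕ} (h : n < l) : besselPolyCoeff n l = 0 := by
  simp [besselPolyCoeff, Nat.choose_eq_zero_of_lt (by omega : n + l < 2 * l)]

theorem besselPolyCoeff_zero_right (n : ℕ) : besselPolyCoeff n 0 = 1 := by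
  simp [besselPolyCoeff]

theorem factorial_add_eq_besselPolyCoeff {n l : ℕ} (h : l ≤ n) :
    (n + l)! = 2 ^ l * l ! * (n - l)! * besselPolyCoeff n l := by
  rw [← choose_mul_factorial_mul_factorial (by omega : 2 * l ≤ n + l), Nat.factorial_two_mul,
    show n + l - 2 * l = n - l by omega, besselPolyCoeff]
  ring

theorem besselPolyCoeff_succ_succ (n k : ℕ) :
    k * besselPolyCoeff (n + 1) k + besselPolyCoeff (n + 1) (k + 1)
      = (n + 1) * besselPolyCoeff (n + 1) k + besselPolyCoeff n (k + 1) := by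
  simp only [besselPolyCoeff, show n + 1 + (k + 1) = (n + k + 1) + 1 by ring,
    show n + (k + 1) = n + k + 1 by ring, show n + 1 + k = n + k + 1 by ring,
    show 2 * (k + 1) = 2 * k + 1 + 1 by ring, Nat.choose_succ_succ' (n + k + 1),
    show 2 * k + 1 + 1 - 1 = 2 * k + 1 by omega, doubleFactorial_add_one (2 * k)]
  have key := choose_succ_right_eq (n + k + 1) (2 * k)
  rcases le_or_gt (2 * k) (n + k + 1) with h | h
  · obtain ⟨j, hj⟩ : ∃ j, n + 1 = k + j := ⟨n + 1 - k, by omega⟩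
    rw [show n + k + 1 - 2 * k = j by omega] at key
    rw [hj]
    nlinarith [key]
  · simp [Nat.choose_eq_zero_of_lt h, Nat.choose_eq_zero_of_lt (by omega : n + k + 1 < 2 * k + 1)]

theorem besselPolyCoeff_add_two (n k : ℕ) :
    besselPolyCoeff (n + 2) (k + 1)
      = besselPolyCoeff n (k + 1) + (2 * n + 3) * besselPolyCoeff (n + 1) k := by
  simp only [besselPolyCoeff, show n + 2 + (k + 1) = (n + k + 1) + 1 + 1 by ring,
    show n + (k + 1) = n + k + 1 by ring, show n + 1 + k = n + k + 1 by ring,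
    show 2 * (k + 1) = 2 * k + 1 + 1 by ring, Nat.choose_succ_succ' (n + k + 1 + 1),
    Nat.choose_succ_succ' (n + k + 1),
    show 2 * k + 1 + 1 - 1 = 2 * k + 1 by omega, doubleFactorial_add_one (2 * k)]
  have key := choose_succ_right_eq (n + k + 1) (2 * k)
  rcases le_or_gt (2 * k) (n + k + 1) with h | h
  · obtain ⟨j, hj⟩ : ∃ j, n + 1 = k + j := ⟨n + 1 - k, by omega⟩
    rw [show n + k + 1 - 2 * k = j by omega] at key
    rw [show 2 * n + 3 = 2 * k + 1 + 2 * j by omega]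
    nlinarith [key]
  · simp [Nat.choose_eq_zero_of_lt h, Nat.choose_eq_zero_of_lt (by omega : n + k + 1 < 2 * k + 1)]

section BesselPoly

variable (R : Type*) [Semiring R]

noncomputable def besselPoly (n : ℕ) : R[X] :=
  ∑ l ∈ range (n + 1), monomial l (besselPolyCoeff n l : R)

variable {R}

@[simp]
theorem coeff_besselPoly (n k : ℕ) : (besselPoly R n).coeff k = besselPolyCoeff n k := by
  simp only [besselPoly, finsetSum_coeff, coeff_monomial, sum_ite_eq', mem_range]
  split_ifs with h
  · rfl
  · rw [besselPolyCoeff_eq_zero (by omega), Nat.cast_zero]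

theorem besselPoly_add_two (n : ℕ) :
    besselPoly R (n + 2) = besselPoly R n + C (2 * n + 3 : R) * X * besselPoly R (n + 1) := by
  ext k
  cases k with
  | zero => simp [besselPolyCoeff_zero_right]
  | succ k =>
    rw [coeff_add, mul_assoc, coeff_C_mul, coeff_X_mul]
    simp only [coeff_besselPoly, besselPolyCoeff_add_two]
    push_cast
    rfl

theorem X_mul_X_mul_derivative_besselPoly_add (n : ℕ) :
    X * (X * derivative (besselPoly R (n + 1))) + besselPoly R (n + 1)
      = C (n + 1 : R) * X * besselPoly R (n + 1) + besselPoly R n := by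
  ext k
  cases k with
  | zero => simp [besselPolyCoeff_zero_right]
  | succ k =>
    rw [coeff_add, coeff_add, coeff_X_mul, mul_assoc, coeff_C_mul, coeff_X_mul,
      coeff_X_mul_derivative]
    simp only [coeff_besselPoly]
    norm_cast
    rw [besselPolyCoeff_succ_succ]

end BesselPoly

theorem sphericalHankel_eq_eval (n : ℕ) (u : ℝ) :
    sphericalHankel n u = Real.pi * Real.exp (-u) / (2 * u) * (besselPoly ℝ n).eval u⁻¹ := by
  rw [sphericalHankel, besselPoly, eval_finsetSum]
  congr 1
  refine sum_congr rfl fun l hl => ?_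
  rw [eval_monomial, factorial_add_eq_besselPolyCoeff (mem_range_succ_iff.mp hl)]
  push_cast
  field_simp
  rw [mul_pow, mul_div_mul_left _ _ (pow_ne_zero _ two_ne_zero), div_eq_mul_one_div, one_div_pow]

theorem sphericalHankel_pos (n : ℕ) {u : ℝ} (hu : 0 < u) : 0 < sphericalHankel n u :=
  mul_pos (by positivity) (sum_pos (fun l _ => by positivity) nonempty_range_add_one)

theorem sphericalHankel_add_two (n : ℕ) (u : ℝ) :
    sphericalHankel (n + 2) u
      = sphericalHankel n u + (2 * n + 3) / u * sphericalHankel (n + 1) u := by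
  simp only [sphericalHankel_eq_eval, besselPoly_add_two, eval_add, eval_mul, eval_C, eval_X]
  ring

theorem hasDerivAt_sphericalHankel_succ (n : ℕ) {u : ℝ} (hu : u ≠ 0) :
    HasDerivAt (sphericalHankel (n + 1))
      (-((n + 2) / u * sphericalHankel (n + 1) u) - sphericalHankel n u) u := by
  have hfun : sphericalHankel (n + 1) =
      fun v => Real.pi * Real.exp (-v) / (2 * v) * (besselPoly ℝ (n + 1)).eval v⁻¹ :=
    funext (sphericalHankel_eq_eval (n + 1))
  have hprefactor := (((Real.hasDerivAt_exp (-u)).comp u (hasDerivAt_neg u)).const_mul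
    Real.pi).div ((hasDerivAt_id u).const_mul 2) (mul_ne_zero two_ne_zero hu)
  have hpoly := ((besselPoly ℝ (n + 1)).hasDerivAt u⁻¹).comp u (hasDerivAt_inv hu)
  have hode := congrArg (eval u⁻¹) (X_mul_X_mul_derivative_besselPoly_add (R := ℝ) n)
  simp only [eval_add, eval_mul, eval_C, eval_X] at hode
  rw [hfun]
  refine (hprefactor.mul hpoly).congr_deriv ?_
  simp only [id, Function.comp_apply, Pi.div_apply, sphericalHankel_eq_eval n]
  field_simp at hode ⊢
  linear_combination -hode

noncomputable def sphericalHankelRatio (n : ℕ) (u : ℝ) : ℝ :=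
  u * sphericalHankel n u / sphericalHankel (n + 1) u

theorem sphericalHankelRatio_pos (n : ℕ) {u : ℝ} (hu : 0 < u) : 0 < sphericalHankelRatio n u :=
  div_pos (mul_pos hu (sphericalHankel_pos n hu)) (sphericalHankel_pos (n + 1) hu)

theorem sphericalHankelRatio_succ (n : ℕ) {u : ℝ} (hu : 0 < u) :
    sphericalHankelRatio (n + 1) u = u ^ 2 / (2 * n + 3 + sphericalHankelRatio n u) := by
  have := sphericalHankel_pos n hu
  have := sphericalHankel_pos (n + 1) hu
  rw [sphericalHankelRatio, sphericalHankelRatio, sphericalHankel_add_two]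
  field_simp
  ring

theorem sphericalHankelRatio_succ_le (n : ℕ) {u : ℝ} (hu : 0 < u) :
    sphericalHankelRatio (n + 1) u ≤ u ^ 2 := by
  rw [sphericalHankelRatio_succ n hu]
  exact div_le_self (sq_nonneg u) (by linarith [sphericalHankelRatio_pos n hu])

theorem mul_deriv_sphericalHankel_div_add (n : ℕ) {u : ℝ} (hu : 0 < u) :
    u * deriv (sphericalHankel (n + 1)) u / sphericalHankel (n + 1) u + ((n + 1 : ℕ) : ℝ) + 1
      = -sphericalHankelRatio n u := by
  have := sphericalHankel_pos (n + 1) hu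
  rw [(hasDerivAt_sphericalHankel_succ n hu.ne').deriv, sphericalHankelRatio]
  field_simp
  push_cast
  ring

theorem abs_div_two_mul_sub_div_le {a x t b : ℝ} (ha : 0 ≤ a) (hx : 1 ≤ x) (ht : 0 ≤ t)
    (htb : t ≤ b) : |a / (2 * x) - a / (2 * x - 1 + t)| ≤ a * (b + 1) / x ^ 2 := by
  have hx₀ : 0 < x := by linarith
  have hden : x ≤ 2 * x - 1 + t := by linarith
  have hprod : 0 < 2 * x * (2 * x - 1 + t) := mul_pos (by positivity) (by linarith)
  have hdiff : a / (2 * x) - a / (2 * x - 1 + t) = a * (t - 1) / (2 * x * (2 * x - 1 + t)) := by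
    rw [div_sub_div _ _ (by positivity) (by linarith)]
    congr 1
    ring
  have ht₁ : |t - 1| ≤ b + 1 := abs_le.mpr ⟨by linarith, by linarith⟩
  rw [hdiff, abs_div, abs_mul, abs_of_nonneg ha, abs_of_pos hprod,
    div_le_div_iff₀ hprod (by positivity)]
  calc a * |t - 1| * x ^ 2 ≤ a * (b + 1) * x ^ 2 := by gcongr
    _ ≤ a * (b + 1) * (2 * x * (2 * x - 1 + t)) := by
      gcongr
      · exact mul_nonneg ha (by linarith)
      · nlinarith

/-- Large-`n` asymptotics of the logarithmic derivative:
`u k_n'(u)/k_n(u) = −n − 1 − u²/(2n) + O(1/n²)`; in particular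
`u k_n'(u)/k_n(u) + n + 1 → 0` as `n → ∞`. -/
theorem logDeriv_sphericalHankel_asymptotics (u : ℝ) (hu : 0 < u) :
    (∃ C : ℝ, ∀ᶠ n : ℕ in atTop,
        |u * deriv (fun v => sphericalHankel n v) u / sphericalHankel n u
          + (n : ℝ) + 1 + u ^ 2 / (2 * (n : ℝ))| ≤ C / (n : ℝ) ^ 2) ∧
    Tendsto (fun n : ℕ =>
        u * deriv (fun v => sphericalHankel n v) u / sphericalHankel n u + (n : ℝ) + 1)
      atTop (nhds 0) := by
  have hbound : ∀ᶠ n : ℕ in atTop,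
      |u * deriv (fun v => sphericalHankel n v) u / sphericalHankel n u
        + (n : ℝ) + 1 + u ^ 2 / (2 * (n : ℝ))| ≤ u ^ 2 * (u ^ 2 + 1) / (n : ℝ) ^ 2 := by
    filter_upwards [eventually_ge_atTop 3] with n hn
    obtain ⟨m, rfl⟩ : ∃ m, n = m + 2 + 1 := ⟨n - 3, by omega⟩
    rw [mul_deriv_sphericalHankel_div_add (m + 2) hu, sphericalHankelRatio_succ (m + 1) hu]
    convert abs_div_two_mul_sub_div_le (sq_nonneg u) (x := ((m + 2 + 1 : ℕ) : ℝ))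
      (Nat.one_le_cast.mpr (by omega)) (sphericalHankelRatio_pos (m + 1) hu).le
      (sphericalHankelRatio_succ_le m hu) using 2
    push_cast
    ring
  have hcorr : Tendsto (fun n : ℕ => u ^ 2 / (2 * (n : ℝ))) atTop (nhds 0) :=
    tendsto_const_nhds.div_atTop (tendsto_natCast_atTop_atTop.const_mul_atTop two_pos)
  have hrem : Tendsto (fun n : ℕ => u ^ 2 * (u ^ 2 + 1) / (n : ℝ) ^ 2) atTop (nhds 0) :=
    tendsto_const_nhds.div_atTop ((tendsto_pow_atTop two_ne_zero).comp tendsto_natCast_atTop_atTop)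
  refine ⟨⟨_, hbound⟩, ?_⟩
  simpa using (squeeze_zero_norm' hbound hrem).sub hcorr
end
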